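/- arXiv:1908.03954 — 7 statements merged into one kernel-verified Lean document; each statement's English description precedes it below -/
import Mathlib

section
/- If X is a set of mutually co-duplicate vertices in a simple graph G (every two distinct vertices in X are adjacent and their neighborhoods agree outside the pair), then the multiplicity of the eigenvalue -1 of A(G) is at least |X| - 1. -/
open scoped Classical

noncomputable section

/-- Threshold graph built from a binary string `b` (indexed by `Fin n`, first bit should be 0):
vertex `j` is joined to all earlier vertices iff `b j = true`. -/
def thresholdGraph {n : ℕ} (b : Fin n → Bool) : SimpleGraph (Fin n) where
  Adj i j := (i < j ∧ b j = true) ∨ (j < i ∧ b i = true)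
  symm := ⟨by intro i j h; tauto⟩
  loopless := ⟨by intro i h; rcases h with ⟨h, -⟩ | ⟨h, -⟩ <;> exact absurd h (lt_irrefl i)⟩

/-- Threshold graph of a binary string given as a list. -/
def thresholdGraphL (b : List Bool) : SimpleGraph (Fin b.length) :=
  thresholdGraph (fun i => b.get i)

/-- The binary string `0^{s_1}1^{t_1} ⋯ 0^{s_k}1^{t_k}`. -/
def runList {k : ℕ} (s t : Fin k → ℕ) : List Bool :=
  (List.ofFn fun i => List.replicate (s i) false ++ List.replicate (t i) true).flatten

/-- The connected anti-regular graph on `m` vertices, i.e. the threshold graph with the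
alternating string `0101⋯01` (`m` even) or `00101⋯01` (`m` odd). -/
def antiRegular (m : ℕ) : SimpleGraph (Fin m) :=
  thresholdGraph (fun i =>
    if m % 2 = 0 then decide ((i : ℕ) % 2 = 1)
    else decide (2 ≤ (i : ℕ) ∧ (i : ℕ) % 2 = 0))

/-- The (0,1)-adjacency matrix of a graph, over `ℝ`. -/
def adjMat {V : Type} [Fintype V] [DecidableEq V] (G : SimpleGraph V) : Matrix V V ℝ :=
  Matrix.of fun i j => if G.Adj i j then 1 else 0

/-- `μ` is an eigenvalue of the matrix `A`. -/
def IsEigenvalue {V : Type} [Fintype V] [DecidableEq V] (A : Matrix V V ℝ) (μ : ℝ) : Prop :=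
  ∃ x : V → ℝ, x ≠ 0 ∧ A.mulVec x = μ • x

/-- The (geometric) multiplicity of `μ` as an eigenvalue of `A`. -/
def eigMult {V : Type} [Fintype V] [DecidableEq V] (A : Matrix V V ℝ) (μ : ℝ) : ℕ :=
  Module.finrank ℝ (LinearMap.ker (A.mulVecLin - μ • LinearMap.id))

/-- `μ = μ⁻(A)`: the largest eigenvalue of `A` that is strictly less than `-1`. -/
def IsMuMinus {V : Type} [Fintype V] [DecidableEq V] (A : Matrix V V ℝ) (μ : ℝ) : Prop :=
  IsEigenvalue A μ ∧ μ < -1 ∧ ∀ x, IsEigenvalue A x → x < -1 → x ≤ μ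

/-- `μ = μ⁺(A)`: the smallest strictly positive eigenvalue of `A`. -/
def IsMuPlus {V : Type} [Fintype V] [DecidableEq V] (A : Matrix V V ℝ) (μ : ℝ) : Prop :=
  IsEigenvalue A μ ∧ 0 < μ ∧ ∀ x, IsEigenvalue A x → 0 < x → μ ≤ x

/-- `μ = λ_max(A)`: the largest eigenvalue of `A`. -/
def IsMaxEig {V : Type} [Fintype V] [DecidableEq V] (A : Matrix V V ℝ) (μ : ℝ) : Prop :=
  IsEigenvalue A μ ∧ ∀ x, IsEigenvalue A x → x ≤ μ

/-- `μ = λ_min(A)`: the smallest eigenvalue of `A`. -/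
def IsMinEig {V : Type} [Fintype V] [DecidableEq V] (A : Matrix V V ℝ) (μ : ℝ) : Prop :=
  IsEigenvalue A μ ∧ ∀ x, IsEigenvalue A x → μ ≤ x

/-! Distinct mutually co-duplicate vertices `i, j` have the same closed neighbourhood, so the
columns `i` and `j` of `A(G) + I` coincide and `eᵢ - eⱼ` lies in `ker (A(G) + I)`. Fixing
`i₀ ∈ X`, the vectors `eⱼ - e_{i₀}` for `j ∈ X \ {i₀}` are linearly independent, since their
restrictions to `X \ {i₀}` are the standard basis vectors. -/

def SimpleGraph.IsCoduplicate {V : Type} (G : SimpleGraph V) (i j : V) : Prop :=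
  G.Adj i j ∧ ∀ u, u ≠ i → u ≠ j → (G.Adj i u ↔ G.Adj j u)

theorem Pi.linearIndependent_single_sub_single {ι R : Type*} [Ring R] [DecidableEq ι]
    {s : Set ι} {i₀ : ι} (hi₀ : i₀ ∉ s) :
    LinearIndependent R fun j : s ↦ (Pi.single (j : ι) (1 : R) - Pi.single i₀ 1 : ι → R) := by
  refine LinearIndependent.of_comp (LinearMap.funLeft R R ((↑) : s → ι)) ?_
  convert Pi.linearIndependent_single_one s R using 1
  ext j k
  have hk : (k : ι) ≠ i₀ := fun h ↦ hi₀ (h ▸ k.2)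
  simp [LinearMap.funLeft_apply, Pi.single_apply, hk, Subtype.ext_iff]

theorem SimpleGraph.IsCoduplicate.adjMat_mulVec_single_sub_single {V : Type} [Fintype V]
    [DecidableEq V] {G : SimpleGraph V} {i j : V} (hij : G.IsCoduplicate i j) :
    (adjMat G).mulVec (Pi.single i 1 - Pi.single j 1) = -(Pi.single i 1 - Pi.single j 1) := by
  obtain ⟨hadj, hnbr⟩ := hij
  ext u
  simp only [Matrix.mulVec_sub, Matrix.mulVec_single, Pi.sub_apply, Pi.neg_apply, Matrix.col_apply,
    adjMat, Matrix.of_apply, MulOpposite.op_one, one_smul]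
  rcases eq_or_ne u i with rfl | hui
  · simp [hadj, hadj.ne]
  rcases eq_or_ne u j with rfl | huj
  · simp [hadj.symm, hui]
  · simp [hui, huj, G.adj_comm u, hnbr u hui huj]

/-- a set `X` of mutually co-duplicate vertices forces the eigenvalue `-1` to have
multiplicity at least `|X| - 1`. -/
theorem mutually_coduplicate_negone_multiplicity {V : Type} [Fintype V] [DecidableEq V]
    (G : SimpleGraph V) (X : Finset V)
    (h : ∀ i ∈ X, ∀ j ∈ X, i ≠ j →
      G.Adj i j ∧ ∀ u, u ≠ i → u ≠ j → (G.Adj i u ↔ G.Adj j u)) :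
    X.card - 1 ≤ eigMult (adjMat G) (-1) := by
  obtain rfl | ⟨i₀, hi₀⟩ := X.eq_empty_or_nonempty
  · simp
  set S := X.erase i₀
  have hS : i₀ ∉ (S : Set V) := X.notMem_erase i₀
  have hspan : Submodule.span ℝ (Set.range fun j : (S : Set V) ↦ Pi.single (j : V) (1 : ℝ) -
      Pi.single i₀ 1) ≤ LinearMap.ker ((adjMat G).mulVecLin - (-1 : ℝ) • LinearMap.id) := by
    rw [Submodule.span_le]
    rintro _ ⟨⟨j, hj⟩, rfl⟩
    have hcodup : G.IsCoduplicate j i₀ :=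
      h j (X.mem_of_mem_erase hj) i₀ hi₀ (X.ne_of_mem_erase hj)
    simp [hcodup.adjMat_mulVec_single_sub_single]
  calc X.card - 1 = Fintype.card (S : Set V) := by
        simp only [Finset.coe_sort_coe, Fintype.card_coe, S, X.card_erase_of_mem hi₀]
    _ = _ := (finrank_span_eq_card (Pi.linearIndependent_single_sub_single hS)).symm
    _ ≤ eigMult (adjMat G) (-1) := Submodule.finrank_mono hspan
end
end

section
/- Every connected threshold graph on n ≥ 2 vertices is isomorphic to an induced subgraph of the anti-regular graph A_{2n-2}. -/
open scoped Classical

noncomputable section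

def thresholdGraph.embeddingOfStrictMono {n m : ℕ} {b : Fin n → Bool} {c : Fin m → Bool}
    (f : Fin n → Fin m) (hf : StrictMono f) (hbit : ∀ j, c (f j) = b j) :
    thresholdGraph b ↪g thresholdGraph c where
  toEmbedding := ⟨f, hf.injective⟩
  map_rel_iff' {i j} := by
    simp only [Function.Embedding.coeFn_mk, thresholdGraph, hf.lt_iff_lt, hbit]

theorem thresholdGraph_isIsolated_last {k : ℕ} {b : Fin (k + 1) → Bool}
    (hb : b (Fin.last k) = false) : (thresholdGraph b).IsIsolated (Fin.last k) := by
  rintro j (⟨hlt, -⟩ | ⟨-, hbj⟩)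
  · exact (Fin.le_last j).not_gt hlt
  · exact Bool.false_ne_true (hb ▸ hbj)

theorem thresholdGraph_last_eq_true_of_connected {k : ℕ} (hk : 0 < k) {b : Fin (k + 1) → Bool}
    (hconn : (thresholdGraph b).Connected) : b (Fin.last k) = true := by
  have : Nontrivial (Fin (k + 1)) := Fin.nontrivial_iff_two_le.mpr (by omega)
  by_contra hb
  exact hconn.preconnected.not_isIsolated _
    (thresholdGraph_isIsolated_last (Bool.not_eq_true _ ▸ hb))

theorem antiRegular_of_even {m : ℕ} (hm : Even m) :
    antiRegular m = thresholdGraph fun i => decide ((i : ℕ) % 2 = 1) := by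
  simp only [antiRegular, Nat.even_iff.mp hm, if_true]

/-- Vertex `j` goes to position `2j - b_j` of the alternating string `0101⋯01`, whose bit there
is `b_j`; this needs `b_0 = 0` (so that `2j - 1` is odd) and `b_k = 1` (so that `2j < 2k`). -/
theorem thresholdGraph_embeds_alternating {k : ℕ} {b : Fin (k + 1) → Bool} (h0 : b 0 = false)
    (hlast : b (Fin.last k) = true) :
    Nonempty (thresholdGraph b ↪g thresholdGraph fun i : Fin (2 * k) => decide ((i : ℕ) % 2 = 1)) := by
  have hpos : ∀ j, b j = true → 0 < (j : ℕ) := by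
    intro j hj
    refine Nat.pos_of_ne_zero fun h => ?_
    obtain rfl : j = 0 := Fin.ext h
    simp [h0] at hj
  have hlt : ∀ j, b j = false → (j : ℕ) < k := by
    intro j hj
    refine lt_of_le_of_ne (Nat.lt_succ_iff.mp j.isLt) fun h => ?_
    obtain rfl : j = Fin.last k := Fin.ext h
    simp [hlast] at hj
  let f : Fin (k + 1) → Fin (2 * k) := fun j =>
    ⟨2 * j - (b j).toNat, by
      cases hj : b j
      · simpa using Nat.mul_lt_mul_of_pos_left (hlt j hj) two_pos
      · have := hpos j hj
        simp only [Bool.toNat_true]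
        omega⟩
  refine ⟨thresholdGraph.embeddingOfStrictMono f (fun i j hij => ?_) fun j => ?_⟩
  · change 2 * (i : ℕ) - (b i).toNat < 2 * j - (b j).toNat
    have : (i : ℕ) < j := hij
    cases b i <;> cases b j <;> simp only [Bool.toNat_false, Bool.toNat_true] <;> omega
  · cases hj : b j
    · simp [f, hj]
    · have := hpos j hj
      simp only [f, hj, Bool.toNat_true, decide_eq_true_eq]
      omega

/-- every connected threshold graph on `n ≥ 2` vertices is an induced subgraph
of the anti-regular graph `A_{2n-2}`. -/
theorem threshold_embeds_in_antiregular {n : ℕ} (hn : 2 ≤ n) (b : Fin n → Bool)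
    (h0 : b ⟨0, by omega⟩ = false) (hconn : (thresholdGraph b).Connected) :
    Nonempty (thresholdGraph b ↪g antiRegular (2 * n - 2)) := by
  obtain ⟨k, rfl⟩ : ∃ k, n = k + 1 := ⟨n - 1, by omega⟩
  rw [show 2 * (k + 1) - 2 = 2 * k by omega, antiRegular_of_even (even_two_mul k)]
  exact thresholdGraph_embeds_alternating h0 (thresholdGraph_last_eq_true_of_connected (by omega) hconn)
end
end

section
/- Let G be a connected threshold graph with binary string b = 0^{s_1} 1^{t_1} ... 0^{s_k} 1^{t_k} on n = Σ(s_i + t_i) vertices. Let N = 2(n-k) if s_1 = 1 and N = 2(n-k) - 1 if s_1 ≥ 2. Then G is isomorphic to an induced subgraph of the anti-regular graph A_N. -/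
open scoped Classical

noncomputable section

/-! Write `P m` for the alternating string `(01)^m`, so that `A_{2m}` has string `P m` and
`A_{2m+1}` has string `0 P m`. A threshold graph embeds as an induced subgraph into the threshold
graph of every string containing its own string as a subsequence, and the block `0^s 1^t` is a
subsequence of `P (s + t - 1)`, and even of `0 P (s + t - 2)` when `s ≥ 2`. Concatenating the
blocks, `b <+ P (n - k)`, and `b <+ 0 P (n - k - 1)` when `s_1 ≥ 2`. -/

open scoped List

def thresholdGraphEmbedding {m n : ℕ} {b : Fin m → Bool} {c : Fin n → Bool} (e : Fin m ↪o Fin n)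
    (he : ∀ i, c (e i) = b i) : thresholdGraph b ↪g thresholdGraph c where
  toEmbedding := e.toEmbedding
  map_rel_iff' {i j} := by simp [thresholdGraph, he]

theorem nonempty_thresholdGraphL_embedding_of_sublist {b : List Bool} {n : ℕ} {c : Fin n → Bool}
    (h : b <+ List.ofFn c) : Nonempty (thresholdGraphL b ↪g thresholdGraph c) := by
  obtain ⟨e, he⟩ := List.sublist_iff_exists_fin_orderEmbedding_get_eq.mp h
  refine ⟨thresholdGraphEmbedding (e.trans (Fin.castOrderIso List.length_ofFn).toOrderEmbedding)
    fun i => ?_⟩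
  simpa [thresholdGraphL, Fin.cast] using (he i).symm

def altPairs (m : ℕ) : List Bool := (List.replicate m [false, true]).flatten

theorem altPairs_succ (m : ℕ) : altPairs (m + 1) = false :: true :: altPairs m := rfl

theorem altPairs_add (a b : ℕ) : altPairs (a + b) = altPairs a ++ altPairs b := by
  simp only [altPairs, List.replicate_add, List.flatten_append]

theorem length_altPairs (m : ℕ) : (altPairs m).length = 2 * m := by
  simp [altPairs]; ring

theorem getElem_altPairs {m i : ℕ} (h : i < (altPairs m).length) :
    (altPairs m)[i] = decide (i % 2 = 1) := by
  induction m generalizing i with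
  | zero => simp [altPairs] at h
  | succ m ih =>
    simp only [altPairs_succ] at h ⊢
    rcases i with _ | _ | i
    · rfl
    · rfl
    · rw [List.getElem_cons_succ, List.getElem_cons_succ, ih, decide_eq_decide]
      omega

def antiRegularString (m : ℕ) (i : Fin m) : Bool :=
  if m % 2 = 0 then decide ((i : ℕ) % 2 = 1) else decide (2 ≤ (i : ℕ) ∧ (i : ℕ) % 2 = 0)

theorem antiRegular_eq_thresholdGraph (m : ℕ) :
    antiRegular m = thresholdGraph (antiRegularString m) := rfl

theorem ofFn_antiRegularString_two_mul (m : ℕ) :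
    List.ofFn (antiRegularString (2 * m)) = altPairs m := by
  refine List.ext_getElem (by simp [length_altPairs]) fun i _ h => ?_
  simp [antiRegularString, getElem_altPairs]

theorem ofFn_antiRegularString_two_mul_add_one (m : ℕ) :
    List.ofFn (antiRegularString (2 * m + 1)) = false :: altPairs m := by
  refine List.ext_getElem (by simp [length_altPairs]) fun i _ h => ?_
  rcases i with _ | i
  · simp [antiRegularString]
  · simp only [antiRegularString, List.getElem_ofFn, List.getElem_cons_succ, getElem_altPairs]
    simp only [show (2 * m + 1) % 2 ≠ 0 by omega, if_false, decide_eq_decide]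
    omega

theorem replicate_sublist_altPairs (x : Bool) (m : ℕ) : List.replicate m x <+ altPairs m := by
  induction m with
  | zero => simp
  | succ m ih =>
    rw [altPairs_succ, List.replicate_succ]
    cases x
    · exact (ih.cons _).cons_cons _
    · exact (ih.cons_cons _).cons _

theorem replicate_append_replicate_sublist_altPairs {s t : ℕ} (hs : 1 ≤ s) (ht : 1 ≤ t) :
    List.replicate s false ++ List.replicate t true <+ altPairs (s + t - 1) := by
  obtain ⟨s, rfl⟩ := Nat.exists_eq_add_of_le' hs
  obtain ⟨t, rfl⟩ := Nat.exists_eq_add_of_le' ht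
  rw [show s + 1 + (t + 1) - 1 = s + (t + 1) by omega, altPairs_add, altPairs_succ,
    List.replicate_succ', List.replicate_succ, List.append_assoc]
  exact (replicate_sublist_altPairs _ _).append
    (((replicate_sublist_altPairs _ _).cons_cons _).cons_cons _)

theorem replicate_append_replicate_sublist_cons_altPairs {s t : ℕ} (hs : 2 ≤ s) (ht : 1 ≤ t) :
    List.replicate s false ++ List.replicate t true <+ false :: altPairs (s + t - 2) := by
  obtain ⟨s, rfl⟩ := Nat.exists_eq_add_of_le' hs
  rw [show s + 1 + 1 + t - 2 = s + 1 + t - 1 by omega, List.replicate_succ, List.cons_append]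
  exact (replicate_append_replicate_sublist_altPairs (by omega) ht).cons_cons _

theorem runList_succ {k : ℕ} (s t : Fin (k + 1) → ℕ) :
    runList s t = (List.replicate (s 0) false ++ List.replicate (t 0) true) ++
      runList (fun i => s i.succ) (fun i => t i.succ) := by
  simp [runList, List.ofFn_succ]

theorem runList_sublist_altPairs {k : ℕ} {s t : Fin k → ℕ} (hs : ∀ i, 1 ≤ s i)
    (ht : ∀ i, 1 ≤ t i) : runList s t <+ altPairs (∑ i, (s i + t i - 1)) := by
  induction k with
  | zero => simp [runList, altPairs]
  | succ k ih =>
    rw [runList_succ, Fin.sum_univ_succ, altPairs_add]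
    exact (replicate_append_replicate_sublist_altPairs (hs 0) (ht 0)).append
      (ih (fun i => hs i.succ) (fun i => ht i.succ))

theorem runList_sublist_cons_altPairs {k : ℕ} {s t : Fin (k + 1) → ℕ} (hs : ∀ i, 1 ≤ s i)
    (ht : ∀ i, 1 ≤ t i) (hs₀ : 2 ≤ s 0) :
    runList s t <+ false :: altPairs (∑ i, (s i + t i - 1) - 1) := by
  rw [runList_succ, Fin.sum_univ_succ, show ∀ R, s 0 + t 0 - 1 + R - 1 = s 0 + t 0 - 2 + R by
    intro R; omega, altPairs_add, ← List.cons_append]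
  exact (replicate_append_replicate_sublist_cons_altPairs hs₀ (ht 0)).append
    (runList_sublist_altPairs (fun i => hs i.succ) (fun i => ht i.succ))

theorem Finset.sum_tsub_one_of_one_le {ι : Type*} [Fintype ι] {f : ι → ℕ} (hf : ∀ i, 1 ≤ f i) :
    ∑ i, (f i - 1) = ∑ i, f i - Fintype.card ι := by
  rw [Finset.sum_tsub_distrib _ fun i _ => hf i]
  simp

/-- a connected threshold graph with string `0^{s_1}1^{t_1}⋯0^{s_k}1^{t_k}` on
`n` vertices is an induced subgraph of `A_N`, with `N = 2(n-k)` if `s_1 = 1` and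
`N = 2(n-k) - 1` if `s_1 ≥ 2`. -/
theorem smallest_antiregular_supergraph {k : ℕ} (hk : 0 < k) (s t : Fin k → ℕ)
    (hs : ∀ i, 1 ≤ s i) (ht : ∀ i, 1 ≤ t i)
    (n : ℕ) (hn : n = ∑ i, (s i + t i))
    (N : ℕ) (hN : N = if s ⟨0, hk⟩ = 1 then 2 * (n - k) else 2 * (n - k) - 1) :
    Nonempty (thresholdGraphL (runList s t) ↪g antiRegular N) := by
  rw [antiRegular_eq_thresholdGraph]
  apply nonempty_thresholdGraphL_embedding_of_sublist
  obtain ⟨k, rfl⟩ := Nat.exists_eq_add_of_le' hk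
  have hm : n - (k + 1) = ∑ i, (s i + t i - 1) := by
    rw [Finset.sum_tsub_one_of_one_le fun i => (hs i).trans (Nat.le_add_right _ _), hn,
      Fintype.card_fin]
  split_ifs at hN with hs₀
  · rw [hN, hm, ofFn_antiRegularString_two_mul]
    exact runList_sublist_altPairs hs ht
  · have hs₀' : 2 ≤ s 0 := by have := hs 0; change ¬s 0 = 1 at hs₀; omega
    have : s 0 + t 0 - 1 ≤ ∑ i, (s i + t i - 1) :=
      Finset.single_le_sum (f := fun i => s i + t i - 1) (fun i _ => Nat.zero_le _)
        (Finset.mem_univ 0)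
    rw [hN, show 2 * (n - (k + 1)) - 1 = 2 * (n - (k + 1) - 1) + 1 by omega,
      ofFn_antiRegularString_two_mul_add_one, hm]
    exact runList_sublist_cons_altPairs hs ht hs₀'
end
end

section
/- The anti-regular graph A_n has inertia (k, 0, k) when n = 2k and (k, 1, k) when n = 2k+1; that is, A_{2k} has k negative and k positive adjacency eigenvalues and no zero eigenvalue, while A_{2k+1} has k negative eigenvalues, one zero eigenvalue, and k positive eigenvalues. -/
open scoped Classical

noncomputable section

/-!
Sylvester's law of inertia (in Mathlib through `QuadraticForm.sigPos` and
`QuadraticForm.sigNeg`) makes the inertia of a real symmetric matrix invariant under congruence.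
Writing a symmetric block matrix with invertible corner `D` as `Lᵀ (S ⊕ D) L`, with `S` the
Schur complement, gives Haynsworth's additivity `In M = In S + In D`.

In `A_{m+2}` the vertex `m` is adjacent only to `m + 1`, and `m + 1` is adjacent to every vertex.
Taking for `D` the block `!![0, 1; 1, 0]` of these two vertices, of inertia `(1, 0, 1)` and equal
to its own inverse, every row of the off-diagonal block `B` is `(0, 1)`, so `B D⁻¹ Bᵀ = 0` and the
Schur complement is `A_m` itself. Hence `In A_{m+2} = In A_m + (1, 0, 1)`, and the theorem
follows by induction from `A_0` and `A_1`.
-/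

open Matrix Module QuadraticMap QuadraticForm

lemma Multiset.card_filter_map_univ {ι α : Type*} [Fintype ι] (f : ι → α) (p : α → Prop)
    [DecidablePred p] : ((Finset.univ.val.map f).filter p).card = {i | p (f i)}.ncard := by
  rw [Multiset.filter_map, Multiset.card_map, Set.ncard_eq_toFinset_card', Set.toFinset_ofPred]
  rfl

namespace Matrix

variable {n m : Type*} [Fintype n] [DecidableEq n] [Fintype m] [DecidableEq m]

def inertia (A : Matrix n n ℝ) : ℕ × ℕ × ℕ :=
  ((A.charpoly.roots.filter (fun x => x < 0)).card,
    (A.charpoly.roots.filter (fun x => x = 0)).card,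
    (A.charpoly.roots.filter (fun x => 0 < x)).card)

section Congruence

variable {R : Type*} [CommRing R]

lemma toQuadraticForm'_apply (A : Matrix n n R) (x : n → R) :
    A.toQuadraticForm' x = x ⬝ᵥ (A *ᵥ x) := by
  simp [toQuadraticForm', toLinearMap₂'_apply']

lemma toQuadraticForm'_diagonal (d : n → R) :
    (diagonal d).toQuadraticForm' = weightedSumSquares R d := by
  ext x
  simp only [toQuadraticForm'_apply, weightedSumSquares_apply, dotProduct, mulVec_diagonal,
    smul_eq_mul]
  exact Finset.sum_congr rfl fun i _ => by ring

lemma equivalent_toQuadraticForm'_transpose_mul_mul (A : Matrix n n R) {P : Matrix n n R}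
    (hP : IsUnit P) : (Pᵀ * A * P).toQuadraticForm'.Equivalent A.toQuadraticForm' :=
  ⟨{ toLinearEquiv := P.toLinearEquiv' hP.invertible
     map_app' x := by
       change A.toQuadraticForm' (P *ᵥ x) = _
       rw [toQuadraticForm'_apply, toQuadraticForm'_apply, ← mulVec_mulVec, ← mulVec_mulVec,
         dotProduct_mulVec x, vecMul_transpose] }⟩

omit [DecidableEq n] in
lemma IsSymm.transpose_mul_mul {l : Type*} {A : Matrix n n R} (hA : A.IsSymm)
    (P : Matrix n l R) : (Pᵀ * A * P).IsSymm := by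
  simp [IsSymm, transpose_mul, hA.eq, Matrix.mul_assoc]

end Congruence

lemma IsHermitian.equivalent_weightedSumSquares {A : Matrix n n ℝ} (hA : A.IsHermitian) :
    A.toQuadraticForm'.Equivalent (weightedSumSquares ℝ hA.eigenvalues) := by
  have hU := hA.conjStarAlgAut_star_eigenvectorUnitary
  rw [Unitary.conjStarAlgAut_star_apply, star_eq_conjTranspose,
    conjTranspose_eq_transpose_of_trivial, RCLike.ofReal_real_eq_id, Function.id_comp] at hU
  rw [← toQuadraticForm'_diagonal, ← hU]
  exact (equivalent_toQuadraticForm'_transpose_mul_mul A Unitary.isUnit_coe).symm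

lemma IsSymm.inertia_eq {A : Matrix n n ℝ} (hA : A.IsSymm) :
    inertia A = (sigNeg A.toQuadraticForm', finrank ℝ A.toQuadraticForm'.radical,
      sigPos A.toQuadraticForm') := by
  have hA' : A.IsHermitian := isHermitian_iff_isSymm.mpr hA
  have he := hA'.equivalent_weightedSumSquares
  rw [sigNeg_of_equiv_weightedSumSquares he, finrank_radical_of_equiv_weightedSumSquares he,
    sigPos_of_equiv_weightedSumSquares he, inertia, hA'.roots_charpoly_eq_eigenvalues,
    RCLike.ofReal_real_eq_id, Function.id_comp]
  simp only [Multiset.card_filter_map_univ]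

theorem IsSymm.inertia_transpose_mul_mul {A P : Matrix n n ℝ} (hA : A.IsSymm) (hP : IsUnit P) :
    inertia (Pᵀ * A * P) = inertia A := by
  have he := equivalent_toQuadraticForm'_transpose_mul_mul A hP
  rw [(hA.transpose_mul_mul P).inertia_eq, hA.inertia_eq, he.sigNeg_eq, he.rank_radical_eq,
    he.sigPos_eq]

lemma inertia_submatrix_equiv (A : Matrix n n ℝ) (e : m ≃ n) :
    inertia (A.submatrix e e) = inertia A := by
  rw [inertia, inertia, ← charpoly_reindex e.symm A, reindex_apply, Equiv.symm_symm]

lemma inertia_fromBlocks_zero (A : Matrix n n ℝ) (D : Matrix m m ℝ) :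
    inertia (fromBlocks A 0 0 D) = inertia A + inertia D := by
  simp only [inertia, charpoly_fromBlocks_zero₁₂,
    Polynomial.roots_mul (mul_ne_zero A.charpoly_monic.ne_zero D.charpoly_monic.ne_zero),
    Multiset.filter_add, Multiset.card_add, Prod.mk_add_mk]

theorem inertia_fromBlocks_of_invertible₂₂ {A : Matrix n n ℝ} {D : Matrix m m ℝ}
    (B : Matrix n m ℝ) (hA : A.IsSymm) (hD : D.IsSymm) [Invertible D] :
    inertia (fromBlocks A B Bᵀ D) = inertia (A - B * ⅟D * Bᵀ) + inertia D := by
  have hS : (A - B * ⅟D * Bᵀ).IsSymm := by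
    refine hA.sub ?_
    simp [IsSymm, transpose_mul, transpose_nonsing_inv, hD.eq, Matrix.mul_assoc]
  set L : Matrix (n ⊕ m) (n ⊕ m) ℝ := fromBlocks 1 0 (⅟D * Bᵀ) 1
  have hL : IsUnit L := by
    simp [L, isUnit_iff_isUnit_det]
  have hM : fromBlocks A B Bᵀ D = Lᵀ * fromBlocks (A - B * ⅟D * Bᵀ) 0 0 D * L := by
    rw [fromBlocks_eq_of_invertible₂₂]
    simp [L, fromBlocks_transpose, transpose_mul, transpose_nonsing_inv, hD.eq]
  rw [hM, (hS.fromBlocks (by simp) hD).inertia_transpose_mul_mul hL, inertia_fromBlocks_zero]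

lemma inertia_zero : inertia (0 : Matrix n n ℝ) = (0, Fintype.card n, 0) := by
  simp [inertia, charpoly_zero, Multiset.filter_nsmul, Multiset.filter_singleton]

end Matrix

def swapMatrix : Matrix (Fin 2) (Fin 2) ℝ := !![0, 1; 1, 0]

instance : Invertible swapMatrix :=
  ⟨swapMatrix, by simp [swapMatrix, one_fin_two], by simp [swapMatrix, one_fin_two]⟩

lemma invOf_swapMatrix : ⅟swapMatrix = swapMatrix := rfl

lemma isSymm_swapMatrix : swapMatrix.IsSymm := by
  ext i j
  fin_cases i <;> fin_cases j <;> rfl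

lemma inertia_swapMatrix : inertia swapMatrix = (1, 0, 1) := by
  have hroots : swapMatrix.charpoly.roots = {1, -1} := by
    have h : swapMatrix.charpoly =
        (Polynomial.X - Polynomial.C 1) * (Polynomial.X - Polynomial.C (-1)) := by
      rw [charpoly_fin_two]
      simp [swapMatrix, trace_fin_two, det_fin_two]
      ring
    rw [h, Polynomial.roots_mul ((Polynomial.monic_X_sub_C _).mul
      (Polynomial.monic_X_sub_C _)).ne_zero, Polynomial.roots_X_sub_C, Polynomial.roots_X_sub_C]
    rfl
  norm_num [inertia, hroots, Multiset.filter_singleton]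

lemma adjMat_isSymm {V : Type} [Fintype V] [DecidableEq V] (G : SimpleGraph V) :
    (adjMat G).IsSymm :=
  G.isSymm_adjMatrix

lemma adjMat_eq_zero {V : Type} [Fintype V] [DecidableEq V] [Subsingleton V]
    (G : SimpleGraph V) : adjMat G = 0 := by
  ext i j
  simp [adjMat, Subsingleton.elim i j]

section AntiRegular

variable {m : ℕ}

lemma antiRegular_adj_castAdd_castAdd (i j : Fin m) :
    (antiRegular (m + 2)).Adj (Fin.castAdd 2 i) (Fin.castAdd 2 j) ↔ (antiRegular m).Adj i j := by
  simp only [antiRegular, thresholdGraph, Fin.lt_def, Fin.val_castAdd, Nat.add_mod_right]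

lemma antiRegular_adj_castAdd_natAdd (i : Fin m) (j : Fin 2) :
    (antiRegular (m + 2)).Adj (Fin.castAdd 2 i) (Fin.natAdd m j) ↔ j = 1 := by
  have hi := i.isLt
  fin_cases j <;>
    simp only [antiRegular, thresholdGraph, Fin.lt_def, Fin.val_castAdd, Fin.val_natAdd] <;>
    split_ifs <;> simp <;> omega

lemma antiRegular_adj_natAdd_natAdd (i j : Fin 2) :
    (antiRegular (m + 2)).Adj (Fin.natAdd m i) (Fin.natAdd m j) ↔ i ≠ j := by
  fin_cases i <;> fin_cases j <;>
    simp only [antiRegular, thresholdGraph, Fin.lt_def, Fin.val_natAdd] <;>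
    split_ifs <;> simp <;> omega

lemma adjMat_antiRegular_add_two_submatrix :
    (adjMat (antiRegular (m + 2))).submatrix finSumFinEquiv finSumFinEquiv =
      fromBlocks (adjMat (antiRegular m)) (of fun _ => ![0, 1]) (of fun _ => ![0, 1])ᵀ
        swapMatrix := by
  ext (i | i) (j | j)
  · simp [adjMat, antiRegular_adj_castAdd_castAdd]
  · fin_cases j <;> simp [adjMat, antiRegular_adj_castAdd_natAdd]
  · fin_cases i <;>
      simp [adjMat, SimpleGraph.adj_comm _ (Fin.natAdd _ _), antiRegular_adj_castAdd_natAdd]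
  · fin_cases i <;> fin_cases j <;> simp [adjMat, swapMatrix, antiRegular_adj_natAdd_natAdd]

lemma inertia_adjMat_antiRegular_add_two :
    inertia (adjMat (antiRegular (m + 2))) = inertia (adjMat (antiRegular m)) + (1, 0, 1) := by
  have hschur : (of fun _ => ![0, 1] : Matrix (Fin m) (Fin 2) ℝ) * ⅟swapMatrix *
      (of fun _ => ![0, 1] : Matrix (Fin m) (Fin 2) ℝ)ᵀ = 0 := by
    rw [invOf_swapMatrix]
    ext i j
    simp [swapMatrix, mul_apply, Fin.sum_univ_two]
  rw [← inertia_submatrix_equiv _ finSumFinEquiv, adjMat_antiRegular_add_two_submatrix,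
    inertia_fromBlocks_of_invertible₂₂ _ (adjMat_isSymm _) isSymm_swapMatrix, hschur, sub_zero,
    inertia_swapMatrix]

end AntiRegular

lemma inertia_adjMat_antiRegular (n : ℕ) :
    inertia (adjMat (antiRegular n)) = (n / 2, n % 2, n / 2) := by
  induction n using Nat.twoStepInduction with
  | zero => simp [adjMat_eq_zero, inertia_zero]
  | one => simp [adjMat_eq_zero, inertia_zero]
  | more m ih _ =>
    rw [inertia_adjMat_antiRegular_add_two, ih]
    simp only [Prod.mk_add_mk, Prod.mk.injEq]
    omega

/-- the inertia of the anti-regular graph: `A_{2k}` has `k` negative, no zero and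
`k` positive eigenvalues; `A_{2k+1}` has `k` negative, one zero and `k` positive eigenvalues
(counted with multiplicity, via the real roots of the characteristic polynomial). -/
theorem antiregular_inertia (k : ℕ) :
    ((((adjMat (antiRegular (2 * k))).charpoly.roots.filter (fun x => x < 0)).card = k ∧
      (((adjMat (antiRegular (2 * k))).charpoly.roots.filter (fun x => x = 0)).card = 0) ∧
      (((adjMat (antiRegular (2 * k))).charpoly.roots.filter (fun x => 0 < x)).card = k)) ∧
     (((adjMat (antiRegular (2 * k + 1))).charpoly.roots.filter (fun x => x < 0)).card = k ∧
      (((adjMat (antiRegular (2 * k + 1))).charpoly.roots.filter (fun x => x = 0)).card = 1) ∧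
      (((adjMat (antiRegular (2 * k + 1))).charpoly.roots.filter (fun x => 0 < x)).card = k))) := by
  have heven := inertia_adjMat_antiRegular (2 * k)
  have hodd := inertia_adjMat_antiRegular (2 * k + 1)
  simp only [inertia, Prod.mk.injEq] at heven hodd
  omega
end
end

section
/- For every k ≥ 2, the adjacency matrix of the even anti-regular graph A_{2k} has -1 as an eigenvalue. -/
open scoped Classical

noncomputable section

/-- The difference of the indicator vectors of two adjacent vertices with the same neighbours
otherwise is a `-1`-eigenvector of the adjacency matrix. -/
theorem isEigenvalue_neg_one_of_adj_of_twin {V : Type} [Fintype V] [DecidableEq V]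
    (G : SimpleGraph V) {i j : V} (hij : G.Adj i j)
    (htwin : ∀ v, v ≠ i → v ≠ j → (G.Adj v i ↔ G.Adj v j)) :
    IsEigenvalue (adjMat G) (-1) := by
  refine ⟨Pi.single i 1 - Pi.single j 1, fun h => ?_, ?_⟩
  · have := congrFun h i
    simp [hij.ne] at this
  · ext v
    simp only [Matrix.mulVec_sub, Matrix.mulVec_single_one, Pi.sub_apply, Pi.smul_apply,
      Matrix.col_apply, adjMat, Matrix.of_apply, smul_eq_mul, Pi.single_apply]
    by_cases hvi : v = i
    · subst hvi; simp [hij, hij.ne]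
    by_cases hvj : v = j
    · subst hvj; simp [hij.symm, hij.ne.symm]
    simp [hvi, hvj, htwin v hvi hvj]

section thresholdGraph

variable {n : ℕ} (b : Fin n → Bool) (h : 1 < n)

theorem thresholdGraph_adj_zero_one (hb : b ⟨1, h⟩ = true) :
    (thresholdGraph b).Adj ⟨0, by omega⟩ ⟨1, h⟩ :=
  Or.inl ⟨Fin.mk_lt_mk.mpr zero_lt_one, hb⟩

theorem thresholdGraph_adj_zero_iff_adj_one (v : Fin n) (hv : 2 ≤ (v : ℕ)) :
    (thresholdGraph b).Adj v ⟨0, by omega⟩ ↔ (thresholdGraph b).Adj v ⟨1, h⟩ := by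
  simp only [thresholdGraph, Fin.lt_def]
  constructor <;> rintro (⟨_, _⟩ | ⟨_, hbv⟩) <;> first | omega | exact Or.inr ⟨by omega, hbv⟩

end thresholdGraph

/-- for `k ≥ 2`, the even anti-regular graph `A_{2k}` has `-1` as an eigenvalue. -/
theorem antiregular_even_has_negone_eigenvalue (k : ℕ) (hk : 2 ≤ k) :
    IsEigenvalue (adjMat (antiRegular (2 * k))) (-1) := by
  have h : 1 < 2 * k := by omega
  refine isEigenvalue_neg_one_of_adj_of_twin _ (thresholdGraph_adj_zero_one _ h (by simp)) ?_
  intro v hv0 hv1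
  refine thresholdGraph_adj_zero_iff_adj_one _ h v ?_
  have hv0' : (v : ℕ) ≠ 0 := fun e => hv0 (Fin.ext e)
  have hv1' : (v : ℕ) ≠ 1 := fun e => hv1 (Fin.ext e)
  omega
end
end

section
/- No threshold graph has an adjacency eigenvalue in the interval [(-1-√2)/2, (-1+√2)/2] other than possibly -1 and/or 0. -/
open scoped Classical

noncomputable section

/-!
Let `x` be an eigenvector for an eigenvalue `μ ∉ {0, -1}` and sweep the vertices in the order
they were added. Write `P j` for the sum of `x` over the first `j` vertices and `R j` for its sum
over the later dominating vertices. The eigenvalue equation at vertex `j` determines `x j` from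
`(P j, R j)`: `μ x j = R j` for an isolated vertex and `(μ + 1) x j = P j + R j` for a dominating
one; so `(P j, R j)` evolves by two linear shears. When `4 μ (μ + 1) ≤ 1`, i.e. `μ` lies in the
interval, the union of two quadratic cones in the `(P + R, R)`-plane is invariant under both
shears, avoids the line `R = 0`, and contains the state after the first vertex as soon as
`R 0 ≠ 0`. Since `R n = 0`, this forces `R 0 = 0`, and then the sweep forces `x = 0`.
-/

/-- For `W ≠ 0`: the slope `R / W` lies between `0` (excluded) and `2 μ`. -/
def InCone (μ W R : ℝ) : Prop := R ≠ 0 ∧ R ^ 2 ≤ 2 * μ * W * R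

/-- The substitution `(μ, W, R) ↦ (-(μ + 1), R, W)` swaps the two cones, and also the isolated
and dominating steps below. -/
def SweepInvariant (μ W R : ℝ) : Prop := InCone μ W R ∨ InCone (-(μ + 1)) R W

namespace InCone

variable {μ W R : ℝ}

theorem left_ne_zero (h : InCone μ W R) : W ≠ 0 := by
  rintro rfl
  exact h.1 (by simpa using h.2)

theorem mul_le_sq (hμ : 4 * μ * (μ + 1) ≤ 1) (h : InCone μ W R) :
    2 * (μ + 1) * W * R ≤ W ^ 2 := by
  obtain ⟨hR, hle⟩ := h
  have hpos : 0 < μ * W * R := by nlinarith [sq_pos_of_ne_zero hR]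
  -- `μ W R * W² ≥ (W R)² / 2 ≥ 2 μ (μ + 1) (W R)²`
  have : 0 ≤ μ * W * R * (W ^ 2 - 2 * (μ + 1) * W * R) := by
    nlinarith [mul_le_mul_of_nonneg_left hle (sq_nonneg W), sq_nonneg (W * R)]
  nlinarith [nonneg_of_mul_nonneg_right this hpos]

end InCone

namespace SweepInvariant

variable {μ W R : ℝ}

theorem start (hμ0 : μ ≠ 0) (hμ1 : μ + 1 ≠ 0) {x : ℝ} (hx : x ≠ 0) :
    SweepInvariant μ ((μ + 1) * x) (μ * x) := by
  rcases le_or_gt 0 (2 * μ + 1) with h | h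
  · exact .inl ⟨mul_ne_zero hμ0 hx, by nlinarith [sq_nonneg (μ * x)]⟩
  · exact .inr ⟨mul_ne_zero hμ1 hx, by nlinarith [sq_nonneg ((μ + 1) * x)]⟩

theorem step_dominating (hμ : 4 * μ * (μ + 1) ≤ 1) (h : SweepInvariant μ W R) {x : ℝ}
    (hx : (μ + 1) * x = W) : SweepInvariant μ W (R - x) := by
  refine .inr ⟨?_, ?_⟩
  · rcases h with h | h
    · exact h.left_ne_zero
    · exact h.1
  · have : 2 * (μ + 1) * W * R ≤ W ^ 2 := by
      rcases h with h | ⟨-, hle⟩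
      · exact h.mul_le_sq hμ
      · nlinarith [sq_nonneg W]
    have hxW : (μ + 1) * x * W = W ^ 2 := by rw [hx]; ring
    linear_combination this - 2 * hxW

theorem step_isolated (hμ : 4 * μ * (μ + 1) ≤ 1) (h : SweepInvariant μ W R) {x : ℝ}
    (hx : μ * x = R) : SweepInvariant μ (W + x) R := by
  have hxR : μ * x * R = R ^ 2 := by rw [hx]; ring
  rcases h with h | h
  · exact .inl ⟨h.1, by nlinarith [h.2, sq_nonneg R]⟩
  · have hμ' : 4 * -(μ + 1) * (-(μ + 1) + 1) ≤ 1 := by linarith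
    have := h.mul_le_sq hμ'
    exact .inl ⟨h.left_ne_zero, by linear_combination this - 2 * hxR⟩

theorem not_zero_right : ¬SweepInvariant μ W 0 := by
  rintro (h | ⟨hW, hle⟩)
  · exact h.1 rfl
  · exact hW (by simpa using hle)

end SweepInvariant

section ThresholdSweep

variable {n : ℕ} (b : Fin n → Bool) (x : Fin n → ℝ)

def lowerSum (j : ℕ) : ℝ := ∑ i : Fin n with i.val < j, x i

def upperDomSum (j : ℕ) : ℝ := ∑ i : Fin n with j ≤ i.val ∧ b i = true, x i

theorem adjMat_thresholdGraph_mulVec (v : Fin n) :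
    (adjMat (thresholdGraph b)).mulVec x v =
      (if b v = true then lowerSum x v else 0) + upperDomSum b x (v + 1) := by
  have hlower : (if b v = true then lowerSum x v else 0) =
      ∑ i : Fin n, if i.val < v.val ∧ b v = true then x i else 0 := by
    cases b v <;> simp [lowerSum, Finset.sum_filter]
  rw [hlower, upperDomSum, Finset.sum_filter, ← Finset.sum_add_distrib, Matrix.mulVec, dotProduct]
  refine Finset.sum_congr rfl fun i _ => ?_
  simp only [adjMat, thresholdGraph, Matrix.of_apply, Fin.lt_def]
  rcases lt_trichotomy i.val v.val with h | h | h
  · simp [h, h.not_gt, show ¬v.val + 1 ≤ i.val by omega]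
  · simp [h]
  · simp [h, h.not_gt, show v.val + 1 ≤ i.val by omega]

theorem lowerSum_zero : lowerSum x 0 = 0 := by simp [lowerSum]

theorem lowerSum_succ (v : Fin n) : lowerSum x (v + 1) = lowerSum x v + x v := by
  simp only [lowerSum, Finset.sum_filter]
  rw [← Finset.sum_ite_eq_of_mem' Finset.univ v x (Finset.mem_univ v), ← Finset.sum_add_distrib]
  refine Finset.sum_congr rfl fun i _ => ?_
  rcases lt_trichotomy i.val v.val with h | h | h
  · simp [h, Fin.ext_iff, h.ne, show i.val < v.val + 1 by omega]
  · simp [Fin.ext_iff, h]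
  · simp [h.not_gt, show ¬i.val < v.val + 1 by omega, Fin.ext_iff, h.ne']

theorem upperDomSum_succ (v : Fin n) :
    upperDomSum b x v = upperDomSum b x (v + 1) + if b v = true then x v else 0 := by
  simp only [upperDomSum, Finset.sum_filter]
  rw [← Finset.sum_ite_eq_of_mem' Finset.univ v (fun i => if b i = true then x i else 0)
    (Finset.mem_univ v), ← Finset.sum_add_distrib]
  refine Finset.sum_congr rfl fun i _ => ?_
  rcases lt_trichotomy i.val v.val with h | h | h
  · simp [h.not_ge, show ¬v.val + 1 ≤ i.val by omega, Fin.ext_iff, h.ne]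
  · simp [Fin.ext_iff, h]
  · simp [h.le, show v.val + 1 ≤ i.val by omega, Fin.ext_iff, h.ne']

theorem upperDomSum_self : upperDomSum b x n = 0 :=
  Finset.sum_eq_zero fun i hi => absurd (Finset.mem_filter.mp hi).2.1 (not_le.mpr i.isLt)

variable {b x} {μ : ℝ}

theorem eigenvector_dominating_step {v : Fin n}
    (hx : (adjMat (thresholdGraph b)).mulVec x = μ • x) (hv : b v = true) :
    (μ + 1) * x v = lowerSum x v + upperDomSum b x v ∧
      upperDomSum b x (v + 1) = upperDomSum b x v - x v := by
  have hrow := congrFun hx v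
  rw [adjMat_thresholdGraph_mulVec, if_pos hv, Pi.smul_apply, smul_eq_mul] at hrow
  have hsucc := upperDomSum_succ b x v
  rw [if_pos hv] at hsucc
  constructor <;> linarith

theorem eigenvector_isolated_step {v : Fin n}
    (hx : (adjMat (thresholdGraph b)).mulVec x = μ • x) (hv : b v = false) :
    μ * x v = upperDomSum b x v ∧ upperDomSum b x (v + 1) = upperDomSum b x v := by
  have hrow := congrFun hx v
  rw [adjMat_thresholdGraph_mulVec, if_neg (by simp [hv]), Pi.smul_apply, smul_eq_mul] at hrow
  have hsucc := upperDomSum_succ b x v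
  rw [if_neg (by simp [hv])] at hsucc
  constructor <;> linarith

theorem eq_zero_of_upperDomSum_zero (hμ0 : μ ≠ 0) (hμ1 : μ + 1 ≠ 0)
    (hx : (adjMat (thresholdGraph b)).mulVec x = μ • x) (h : upperDomSum b x 0 = 0) : x = 0 := by
  have hzero : ∀ j ≤ n, lowerSum x j = 0 ∧ upperDomSum b x j = 0 := by
    intro j
    induction j with
    | zero => exact fun _ => ⟨lowerSum_zero x, h⟩
    | succ j ih =>
      intro hj
      obtain ⟨v, rfl⟩ : ∃ v : Fin n, v.val = j := ⟨⟨j, hj⟩, rfl⟩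
      obtain ⟨hP, hR⟩ := ih v.isLt.le
      have hv : x v = 0 ∧ upperDomSum b x (v + 1) = 0 := by
        cases hb : b v
        · obtain ⟨h1, h2⟩ := eigenvector_isolated_step hx hb
          exact ⟨(mul_eq_zero.mp (h1.trans hR)).resolve_left hμ0, h2.trans hR⟩
        · obtain ⟨h1, h2⟩ := eigenvector_dominating_step hx hb
          have hxv := (mul_eq_zero.mp (by rw [h1, hP, hR, add_zero])).resolve_left hμ1
          exact ⟨hxv, by rw [h2, hR, hxv, sub_zero]⟩
      exact ⟨by rw [lowerSum_succ x v, hP, hv.1, add_zero], hv.2⟩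
  funext v
  have := lowerSum_succ x v
  rw [(hzero _ v.isLt).1, (hzero _ v.isLt.le).1] at this
  simpa using this.symm

theorem sweepInvariant_one (hμ0 : μ ≠ 0) (hμ1 : μ + 1 ≠ 0)
    (hx : (adjMat (thresholdGraph b)).mulVec x = μ • x) (hn : 0 < n)
    (hR : upperDomSum b x 0 ≠ 0) :
    SweepInvariant μ (lowerSum x 1 + upperDomSum b x 1) (upperDomSum b x 1) := by
  obtain ⟨v, hv0⟩ : ∃ v : Fin n, v.val = 0 := ⟨⟨0, hn⟩, rfl⟩
  have hP0 : lowerSum x v = 0 := by rw [hv0, lowerSum_zero]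
  have hP : lowerSum x (v + 1) = x v := by rw [lowerSum_succ, hP0, zero_add]
  rw [← hv0] at hR
  have hstart : lowerSum x (v + 1) + upperDomSum b x (v + 1) = (μ + 1) * x v ∧
      upperDomSum b x (v + 1) = μ * x v ∧ x v ≠ 0 := by
    cases hb : b v
    · obtain ⟨h1, h2⟩ := eigenvector_isolated_step hx hb
      refine ⟨by rw [hP, h2, ← h1]; ring, by rw [h2, h1], fun h0 => hR ?_⟩
      rw [← h1, h0, mul_zero]
    · obtain ⟨h1, h2⟩ := eigenvector_dominating_step hx hb
      rw [hP0, zero_add] at h1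
      refine ⟨by rw [hP, h2, h1]; ring, by rw [h2, ← h1]; ring, fun h0 => hR ?_⟩
      rw [← h1, h0, mul_zero]
  obtain ⟨hW, hR1, hx0⟩ := hstart
  rw [show 1 = v.val + 1 by omega, hW, hR1]
  exact SweepInvariant.start hμ0 hμ1 hx0

theorem sweepInvariant_succ (hμ : 4 * μ * (μ + 1) ≤ 1)
    (hx : (adjMat (thresholdGraph b)).mulVec x = μ • x) (v : Fin n)
    (h : SweepInvariant μ (lowerSum x v + upperDomSum b x v) (upperDomSum b x v)) :
    SweepInvariant μ (lowerSum x (v + 1) + upperDomSum b x (v + 1)) (upperDomSum b x (v + 1)) := by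
  rw [lowerSum_succ x v]
  cases hv : b v
  · obtain ⟨h1, h2⟩ := eigenvector_isolated_step hx hv
    rw [h2, add_right_comm]
    exact h.step_isolated hμ h1
  · obtain ⟨h1, h2⟩ := eigenvector_dominating_step hx hv
    rw [h2, add_add_sub_cancel]
    exact h.step_dominating hμ h1

theorem sweepInvariant_of_eigenvector (hμ : 4 * μ * (μ + 1) ≤ 1) (hμ0 : μ ≠ 0)
    (hμ1 : μ + 1 ≠ 0) (hx : (adjMat (thresholdGraph b)).mulVec x = μ • x)
    (hR : upperDomSum b x 0 ≠ 0) {j : ℕ} (hj : 1 ≤ j) (hjn : j ≤ n) :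
    SweepInvariant μ (lowerSum x j + upperDomSum b x j) (upperDomSum b x j) := by
  induction j, hj using Nat.le_induction with
  | base => exact sweepInvariant_one hμ0 hμ1 hx hjn hR
  | succ j _ ih =>
    obtain ⟨v, rfl⟩ : ∃ v : Fin n, v.val = j := ⟨⟨j, hjn⟩, rfl⟩
    exact sweepInvariant_succ hμ hx v (ih v.isLt.le)

theorem eq_zero_of_mulVec_eq_smul (hμ : 4 * μ * (μ + 1) ≤ 1) (hμ0 : μ ≠ 0) (hμ1 : μ + 1 ≠ 0)
    (hx : (adjMat (thresholdGraph b)).mulVec x = μ • x) : x = 0 := by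
  refine eq_zero_of_upperDomSum_zero hμ0 hμ1 hx ?_
  rcases n.eq_zero_or_pos with rfl | hn
  · exact upperDomSum_self b x
  by_contra hR
  have := sweepInvariant_of_eigenvector hμ hμ0 hμ1 hx hR hn le_rfl
  rw [upperDomSum_self] at this
  exact SweepInvariant.not_zero_right this

end ThresholdSweep

theorem threshold_omega_free_interval_general {n : ℕ} (b : Fin n → Bool)
    (μ : ℝ)
    (hμ : IsEigenvalue (adjMat (thresholdGraph b)) μ)
    (hmem : μ ∈ Set.Icc ((-1 - Real.sqrt 2) / 2) ((-1 + Real.sqrt 2) / 2)) :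
    μ = -1 ∨ μ = 0 := by
  obtain ⟨x, hx0, hx⟩ := hμ
  have hμ4 : 4 * μ * (μ + 1) ≤ 1 := by
    obtain ⟨hlo, hhi⟩ := hmem
    nlinarith [Real.sq_sqrt (show (0 : ℝ) ≤ 2 by norm_num)]
  by_contra hne
  obtain ⟨hμ1, hμ0⟩ := not_or.mp hne
  exact hx0 (eq_zero_of_mulVec_eq_smul hμ4 hμ0 (fun h => hμ1 (by linarith)) hx)

/-- no threshold graph has an eigenvalue in
`[(-1-√2)/2, (-1+√2)/2]` other than possibly `-1` and/or `0`. -/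
theorem threshold_omega_free_interval {n : ℕ} (b : Fin n → Bool)
    (h0 : ∀ h : 0 < n, b ⟨0, h⟩ = false) (μ : ℝ)
    (hμ : IsEigenvalue (adjMat (thresholdGraph b)) μ)
    (hmem : μ ∈ Set.Icc ((-1 - Real.sqrt 2) / 2) ((-1 + Real.sqrt 2) / 2)) :
    μ = -1 ∨ μ = 0 :=
  threshold_omega_free_interval_general b μ hμ hmem
end
end

section
/- Let G be a threshold graph with binary string b = 0^{s_1}1^{t_1}...0^{s_k}1^{t_k}, and set σ_i = s_1 + ... + s_i and τ_i = t_i + ... + t_k. Then the largest adjacency eigenvalue of G satisfies λ_max(G) ≥ max over 1 ≤ i ≤ k of ((τ_i - 1) + √((τ_i - 1)² + 4 τ_i σ_i))/2, and the smallest satisfies λ_min(G) ≤ min over 1 ≤ i ≤ k of ((τ_i - 1) - √((τ_i - 1)² + 4 τ_i σ_i))/2. -/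
open scoped Classical

noncomputable section

/-! For each `i`, the zeros of the first `i` blocks (`σ_i` pairwise non-adjacent vertices) and the
ones of the blocks `i, …, k` (`τ_i` pairwise adjacent vertices, each adjacent to all those zeros,
which precede it) induce a complete split graph `Z ∪ O`. If `r² = (τ_i - 1) r + τ_i σ_i`, the
vector equal to `τ_i` on `Z`, to `r` on `O` and to `0` elsewhere satisfies `(A x)_v = r x_v` on
`Z ∪ O`, so its Rayleigh quotient in `G` is `r`. Taking for `r` the two roots gives
`λ_min(G) ≤ r₋` and `r₊ ≤ λ_max(G)`. -/

open Matrix Finset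

section Spectral

variable {V : Type} [Fintype V] [DecidableEq V] {A : Matrix V V ℝ}

theorem Matrix.IsHermitian.isEigenvalue_eigenvalues (hA : A.IsHermitian) (j : V) :
    IsEigenvalue A (hA.eigenvalues j) :=
  ⟨hA.eigenvectorBasis j, fun h => hA.eigenvectorBasis.orthonormal.ne_zero j
    (by ext i; exact congrFun h i), hA.mulVec_eigenvectorBasis j⟩

theorem Matrix.IsHermitian.posSemidef_of_forall_isEigenvalue_nonneg (hA : A.IsHermitian)
    (h : ∀ e, IsEigenvalue A e → 0 ≤ e) : A.PosSemidef :=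
  hA.posSemidef_iff_eigenvalues_nonneg.mpr fun j => h _ (hA.isEigenvalue_eigenvalues j)

theorem IsMaxEig.dotProduct_mulVec_le {μ : ℝ} (hA : A.IsHermitian) (hμ : IsMaxEig A μ)
    (x : V → ℝ) : x ⬝ᵥ A *ᵥ x ≤ μ * (x ⬝ᵥ x) := by
  have hB : (μ • 1 - A).IsHermitian := by
    simpa using ((isHermitian_one.smul (IsSelfAdjoint.all μ)).sub hA)
  have hpsd : (μ • 1 - A).PosSemidef := by
    refine hB.posSemidef_of_forall_isEigenvalue_nonneg fun e ⟨v, hv, hBv⟩ => ?_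
    have hAv : A *ᵥ v = (μ - e) • v := by
      rw [sub_mulVec, smul_mulVec, one_mulVec] at hBv
      rw [sub_smul, ← hBv]; abel
    linarith [hμ.2 _ ⟨v, hv, hAv⟩]
  have := hpsd.dotProduct_mulVec_nonneg x
  simp only [star_trivial, sub_mulVec, smul_mulVec, one_mulVec, dotProduct_sub,
    dotProduct_smul, smul_eq_mul] at this
  linarith

theorem IsMaxEig.le_of_dotProduct_mulVec_eq {μ r : ℝ} (hA : A.IsHermitian) (hμ : IsMaxEig A μ)
    {x : V → ℝ} (hx : x ≠ 0) (h : x ⬝ᵥ A *ᵥ x = r * (x ⬝ᵥ x)) : r ≤ μ := by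
  have hpos : 0 < x ⬝ᵥ x := by simpa using dotProduct_star_self_pos_iff.mpr hx
  exact le_of_mul_le_mul_right (h ▸ hμ.dotProduct_mulVec_le hA x) hpos

theorem isEigenvalue_neg_iff {e : ℝ} : IsEigenvalue (-A) e ↔ IsEigenvalue A (-e) := by
  simp only [IsEigenvalue, neg_mulVec, neg_smul, neg_eq_iff_eq_neg]

theorem IsMinEig.neg {μ : ℝ} (hμ : IsMinEig A μ) : IsMaxEig (-A) (-μ) :=
  ⟨isEigenvalue_neg_iff.mpr ((neg_neg μ).symm ▸ hμ.1),
    fun _ he => le_neg_of_le_neg (hμ.2 _ (isEigenvalue_neg_iff.mp he))⟩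

theorem IsMinEig.ge_of_dotProduct_mulVec_eq {μ r : ℝ} (hA : A.IsHermitian) (hμ : IsMinEig A μ)
    {x : V → ℝ} (hx : x ≠ 0) (h : x ⬝ᵥ A *ᵥ x = r * (x ⬝ᵥ x)) : μ ≤ r :=
  neg_le_neg_iff.mp <| hμ.neg.le_of_dotProduct_mulVec_eq hA.neg hx <| by
    rw [neg_mulVec, dotProduct_neg, h, neg_mul]

end Spectral

section CompleteSplit

variable {V : Type}

structure SimpleGraph.IsCompleteSplit (G : SimpleGraph V) (Z O : Set V) : Prop where
  isIndepSet : G.IsIndepSet Z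
  isClique : G.IsClique O
  adj : ∀ u ∈ Z, ∀ v ∈ O, G.Adj u v

theorem SimpleGraph.IsCompleteSplit.disjoint {G : SimpleGraph V} {Z O : Finset V}
    (h : G.IsCompleteSplit Z O) : Disjoint Z O :=
  Finset.disjoint_left.mpr fun v hZ hO => G.irrefl (h.adj v hZ v hO)

variable [DecidableEq V] {Z O : Finset V}

def splitVec (Z O : Finset V) (a c : ℝ) (v : V) : ℝ :=
  (if v ∈ Z then a else 0) + (if v ∈ O then c else 0)

theorem splitVec_of_mem_left (hd : Disjoint Z O) (a c : ℝ) {v : V} (hv : v ∈ Z) :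
    splitVec Z O a c v = a := by
  simp [splitVec, hv, disjoint_left.mp hd hv]

theorem splitVec_of_mem_right (hd : Disjoint Z O) (a c : ℝ) {v : V} (hv : v ∈ O) :
    splitVec Z O a c v = c := by
  simp [splitVec, hv, disjoint_right.mp hd hv]

variable [Fintype V] {G : SimpleGraph V}

theorem adjMat_eq_adjMatrix (G : SimpleGraph V) : adjMat G = G.adjMatrix ℝ := rfl

theorem adjMat_isHermitian (G : SimpleGraph V) : (adjMat G).IsHermitian :=
  G.isHermitian_adjMatrix ℝ

theorem adjMat_mulVec_splitVec (G : SimpleGraph V) (Z O : Finset V) (a c : ℝ) (v : V) :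
    (adjMat G *ᵥ splitVec Z O a c) v =
      #(G.neighborFinset v ∩ Z) * a + #(G.neighborFinset v ∩ O) * c := by
  simp [adjMat_eq_adjMatrix, SimpleGraph.adjMatrix_mulVec_apply, splitVec, sum_add_distrib]

theorem SimpleGraph.IsCompleteSplit.adjMat_mulVec_splitVec_of_mem_left
    (h : G.IsCompleteSplit Z O) (a c : ℝ) {v : V} (hv : v ∈ Z) :
    (adjMat G *ᵥ splitVec Z O a c) v = #O * c := by
  have hZ : G.neighborFinset v ∩ Z = ∅ := by
    ext u
    simp only [mem_inter, SimpleGraph.mem_neighborFinset, notMem_empty, iff_false, not_and]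
    exact fun huv hu => h.isIndepSet hv hu (G.ne_of_adj huv) huv
  have hO : G.neighborFinset v ∩ O = O := by
    ext u
    simp only [mem_inter, SimpleGraph.mem_neighborFinset, and_iff_right_iff_imp]
    exact h.adj v hv u
  simp [adjMat_mulVec_splitVec, hZ, hO]

theorem SimpleGraph.IsCompleteSplit.adjMat_mulVec_splitVec_of_mem_right
    (h : G.IsCompleteSplit Z O) (a c : ℝ) {v : V} (hv : v ∈ O) :
    (adjMat G *ᵥ splitVec Z O a c) v = #Z * a + (#O - 1) * c := by
  have hZ : G.neighborFinset v ∩ Z = Z := by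
    ext u
    simp only [mem_inter, SimpleGraph.mem_neighborFinset, and_iff_right_iff_imp]
    exact fun hu => (h.adj u hu v hv).symm
  have hO : G.neighborFinset v ∩ O = O.erase v := by
    ext u
    simp only [mem_inter, SimpleGraph.mem_neighborFinset, mem_erase]
    exact ⟨fun ⟨huv, hu⟩ => ⟨(G.ne_of_adj huv).symm, hu⟩,
      fun ⟨huv, hu⟩ => ⟨h.isClique hv hu huv.symm, hu⟩⟩
  simp [adjMat_mulVec_splitVec, hZ, hO, cast_card_erase_of_mem hv]

theorem SimpleGraph.IsCompleteSplit.dotProduct_adjMat_mulVec_splitVec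
    (h : G.IsCompleteSplit Z O) {r : ℝ} (hr : r ^ 2 = (#O - 1) * r + #O * #Z) :
    splitVec Z O #O r ⬝ᵥ adjMat G *ᵥ splitVec Z O #O r =
      r * (splitVec Z O #O r ⬝ᵥ splitVec Z O #O r) := by
  simp only [dotProduct, mul_sum]
  refine sum_congr rfl fun v _ => ?_
  by_cases hZ : v ∈ Z
  · rw [h.adjMat_mulVec_splitVec_of_mem_left _ _ hZ, splitVec_of_mem_left h.disjoint _ _ hZ]
    ring
  by_cases hO : v ∈ O
  · rw [h.adjMat_mulVec_splitVec_of_mem_right _ _ hO, splitVec_of_mem_right h.disjoint _ _ hO]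
    linear_combination -r * hr
  · simp [splitVec, hZ, hO]

theorem SimpleGraph.IsCompleteSplit.exists_dotProduct_adjMat_mulVec_eq
    (h : G.IsCompleteSplit Z O) (hZ : Z.Nonempty) (hO : O.Nonempty) {r : ℝ}
    (hr : r ^ 2 = (#O - 1) * r + #O * #Z) :
    ∃ x : V → ℝ, x ≠ 0 ∧ x ⬝ᵥ adjMat G *ᵥ x = r * (x ⬝ᵥ x) := by
  refine ⟨splitVec Z O #O r, fun hx => ?_, h.dotProduct_adjMat_mulVec_splitVec hr⟩
  obtain ⟨v, hv⟩ := hZ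
  have := congrFun hx v
  rw [splitVec_of_mem_left h.disjoint _ _ hv, Pi.zero_apply] at this
  exact hO.card_ne_zero (by exact_mod_cast this)

theorem SimpleGraph.IsCompleteSplit.le_isMaxEig (h : G.IsCompleteSplit Z O) (hZ : Z.Nonempty)
    (hO : O.Nonempty) {μ : ℝ} (hμ : IsMaxEig (adjMat G) μ) :
    ((#O - 1) + √((#O - 1) ^ 2 + 4 * #O * #Z)) / 2 ≤ μ := by
  have hd := Real.sq_sqrt (by positivity : (0 : ℝ) ≤ (#O - 1) ^ 2 + 4 * #O * #Z)
  obtain ⟨x, hx, hxr⟩ := h.exists_dotProduct_adjMat_mulVec_eq hZ hO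
    (r := ((#O - 1) + √((#O - 1) ^ 2 + 4 * #O * #Z)) / 2) (by linear_combination hd / 4)
  exact hμ.le_of_dotProduct_mulVec_eq (adjMat_isHermitian G) hx hxr

theorem SimpleGraph.IsCompleteSplit.isMinEig_le (h : G.IsCompleteSplit Z O) (hZ : Z.Nonempty)
    (hO : O.Nonempty) {μ : ℝ} (hμ : IsMinEig (adjMat G) μ) :
    μ ≤ ((#O - 1) - √((#O - 1) ^ 2 + 4 * #O * #Z)) / 2 := by
  have hd := Real.sq_sqrt (by positivity : (0 : ℝ) ≤ (#O - 1) ^ 2 + 4 * #O * #Z)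
  obtain ⟨x, hx, hxr⟩ := h.exists_dotProduct_adjMat_mulVec_eq hZ hO
    (r := ((#O - 1) - √((#O - 1) ^ 2 + 4 * #O * #Z)) / 2) (by linear_combination hd / 4)
  exact hμ.ge_of_dotProduct_mulVec_eq (adjMat_isHermitian G) hx hxr

end CompleteSplit

theorem thresholdGraph_isCompleteSplit {n : ℕ} (b : Fin n → Bool) (m : ℕ) :
    (thresholdGraph b).IsCompleteSplit
      ↑({q | q.val < m ∧ !b q} : Finset (Fin n))
      ↑({q | m ≤ q.val ∧ b q} : Finset (Fin n)) where
  isIndepSet u hu v hv _ huv := by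
    simp only [coe_filter, mem_univ, true_and, Set.mem_ofPred_eq, Bool.not_eq_true'] at hu hv
    rcases huv with ⟨-, h⟩ | ⟨-, h⟩ <;> simp_all
  isClique u hu v hv huv := by
    simp only [coe_filter, mem_univ, true_and, Set.mem_ofPred_eq] at hu hv
    rcases huv.lt_or_gt with h | h
    · exact Or.inl ⟨h, hv.2⟩
    · exact Or.inr ⟨h, hu.2⟩
  adj u hu v hv := by
    simp only [coe_filter, mem_univ, true_and, Set.mem_ofPred_eq] at hu hv
    exact Or.inl ⟨Fin.lt_def.mpr (by omega), hv.2⟩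

theorem List.card_filter_getElem {α : Type*} (L : List α) (p : α → Bool) :
    #{q : Fin L.length | p L[(q : ℕ)]} = L.countP p := by
  rw [card_filter, Fin.sum_univ_fun_getElem L (fun a => if p a then 1 else 0)]
  induction L with
  | nil => simp
  | cons a L ih => by_cases h : p a <;> simp [h, ih, add_comm]

theorem List.card_filter_lt_getElem {α : Type*} (L : List α) (p : α → Bool) (m : ℕ) :
    #{q : Fin L.length | (q : ℕ) < m ∧ p L[(q : ℕ)]} = (L.take m).countP p := by
  rw [← (L.take m).card_filter_getElem p,
    ← card_map (Fin.castLEEmb (L.length_take_le' m))]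
  congr 1
  ext q
  simp only [Finset.mem_filter, Finset.mem_univ, true_and, Finset.mem_map, Fin.castLEEmb_apply]
  constructor
  · rintro ⟨hq, hp⟩
    exact ⟨⟨q, by simp [hq, q.isLt]⟩, by simpa using hp, rfl⟩
  · rintro ⟨q', hp, rfl⟩
    have := q'.isLt
    simp only [List.length_take] at this
    exact ⟨by simp; omega, by simpa using hp⟩

theorem List.card_filter_le_getElem {α : Type*} (L : List α) (p : α → Bool) (m : ℕ) :
    #{q : Fin L.length | m ≤ (q : ℕ) ∧ p L[(q : ℕ)]} = (L.drop m).countP p := by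
  have hsplit : #{q : Fin L.length | m ≤ (q : ℕ) ∧ p L[(q : ℕ)]} +
      #{q : Fin L.length | (q : ℕ) < m ∧ p L[(q : ℕ)]} =
        #{q : Fin L.length | p L[(q : ℕ)]} := by
    rw [← card_union_of_disjoint (disjoint_filter.mpr fun q _ h1 h2 => by omega), ← filter_or]
    simp only [← or_and_right, le_or_gt, true_and]
  have hcount := congrArg (List.countP p) (L.take_append_drop m)
  rw [List.countP_append] at hcount
  rw [L.card_filter_lt_getElem, L.card_filter_getElem] at hsplit
  omega

theorem List.sum_drop_ofFn {M : Type*} [AddCancelCommMonoid M] {n : ℕ} (f : Fin n → M)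
    (i : ℕ) :
    ((List.ofFn f).drop i).sum = ∑ j : Fin n with i ≤ j.val, f j := by
  have h := (List.ofFn f).sum_take_add_sum_drop i
  rw [sum_take_ofFn, sum_ofFn,
    ← sum_filter_add_sum_filter_not univ (fun j : Fin n => (j : ℕ) < i)] at h
  simpa only [not_lt] using add_left_cancel h

def runBlocks {k : ℕ} (s t : Fin k → ℕ) : List (List Bool) :=
  List.ofFn fun i => List.replicate (s i) false ++ List.replicate (t i) true

theorem runList_eq_append {k : ℕ} (s t : Fin k → ℕ) (i : Fin k) :
    runList s t = (((runBlocks s t).take i).flatten ++ List.replicate (s i) false) ++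
      (List.replicate (t i) true ++ ((runBlocks s t).drop (i + 1)).flatten) := by
  conv_lhs => rw [runList, ← runBlocks, ← (runBlocks s t).take_append_drop i,
    List.drop_eq_getElem_cons (by simp [runBlocks])]
  simp [runBlocks]

theorem exists_countP_take_runList_eq {k : ℕ} (s t : Fin k → ℕ) (i : Fin k) :
    ∃ m, ((runList s t).take m).countP (!·) = ∑ j with j ≤ i, s j ∧
      ((runList s t).drop m).countP (·) = ∑ j with i ≤ j, t j := by
  refine ⟨(((runBlocks s t).take i).flatten ++ List.replicate (s i) false).length, ?_, ?_⟩
  · rw [runList_eq_append s t i, List.take_left]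
    simp only [runBlocks, List.countP_append, List.countP_flatten, List.map_take, List.map_ofFn,
      Function.comp_def, List.countP_replicate, Bool.not_false, ↓reduceIte, Bool.not_true,
      Bool.false_eq_true, add_zero]
    rw [List.sum_take_ofFn, filter_ge_eq_Iic, ← sum_Iio_add_eq_sum_Iic]
    simp [Fin.val_fin_lt, filter_gt_eq_Iio]
  · rw [runList_eq_append s t i, List.drop_left]
    simp only [runBlocks, List.countP_append, List.countP_replicate, ↓reduceIte,
      List.countP_flatten, List.map_drop, List.map_ofFn, Function.comp_def, Bool.false_eq_true,
      zero_add]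
    rw [List.sum_drop_ofFn, filter_le_eq_Ici, ← add_sum_Ioi_eq_sum_Ici]
    simp [Fin.val_fin_lt, filter_lt_eq_Ioi]

theorem exists_isCompleteSplit_runList {k : ℕ} (s t : Fin k → ℕ) (i : Fin k) :
    ∃ Z O : Finset (Fin (runList s t).length),
      (thresholdGraphL (runList s t)).IsCompleteSplit Z O ∧
        #Z = ∑ j with j ≤ i, s j ∧ #O = ∑ j with i ≤ j, t j := by
  obtain ⟨m, hZ, hO⟩ := exists_countP_take_runList_eq s t i
  refine ⟨_, _, thresholdGraph_isCompleteSplit _ m, ?_, ?_⟩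
  · rw [← hZ, ← List.card_filter_lt_getElem]
    simp [List.get_eq_getElem]
  · rw [← hO, ← List.card_filter_le_getElem]
    simp [List.get_eq_getElem]

theorem threshold_extreme_eigenvalue_bounds_general {k : ℕ} (s t : Fin k → ℕ)
    (hs : ∀ i, 1 ≤ s i) (ht : ∀ i, 1 ≤ t i)
    (σ τ : Fin k → ℝ)
    (hσ : ∀ i, σ i = ∑ j ∈ Finset.univ.filter (fun j => j ≤ i), (s j : ℝ))
    (hτ : ∀ i, τ i = ∑ j ∈ Finset.univ.filter (fun j => i ≤ j), (t j : ℝ)) :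
    (∀ μ : ℝ, IsMaxEig (adjMat (thresholdGraphL (runList s t))) μ →
      ∀ i, ((τ i - 1) + Real.sqrt ((τ i - 1) ^ 2 + 4 * τ i * σ i)) / 2 ≤ μ) ∧
    (∀ μ : ℝ, IsMinEig (adjMat (thresholdGraphL (runList s t))) μ →
      ∀ i, μ ≤ ((τ i - 1) - Real.sqrt ((τ i - 1) ^ 2 + 4 * τ i * σ i)) / 2) := by
  have hsplit : ∀ i, ∃ Z O : Finset (Fin (runList s t).length),
      (thresholdGraphL (runList s t)).IsCompleteSplit Z O ∧ Z.Nonempty ∧ O.Nonempty ∧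
        (#Z : ℝ) = σ i ∧ (#O : ℝ) = τ i := by
    intro i
    obtain ⟨Z, O, h, hZ, hO⟩ := exists_isCompleteSplit_runList s t i
    refine ⟨Z, O, h, card_pos.mp ?_, card_pos.mp ?_, by simp [hZ, hσ], by simp [hO, hτ]⟩
    · exact hZ ▸ (hs i).trans (single_le_sum (by simp) (by simp))
    · exact hO ▸ (ht i).trans (single_le_sum (by simp) (by simp))
  refine ⟨fun μ hμ i => ?_, fun μ hμ i => ?_⟩ <;>
  obtain ⟨Z, O, h, hZ, hO, hσi, hτi⟩ := hsplit i <;> rw [← hσi, ← hτi]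
  · exact h.le_isMaxEig hZ hO hμ
  · exact h.isMinEig_le hZ hO hμ

/-- bounds on `λ_max` and `λ_min` of a threshold graph with string
`0^{s_1}1^{t_1}⋯0^{s_k}1^{t_k}`, via `σ_i = s_1 + ⋯ + s_i` and `τ_i = t_i + ⋯ + t_k`. -/
theorem threshold_extreme_eigenvalue_bounds {k : ℕ} (hk : 0 < k) (s t : Fin k → ℕ)
    (hs : ∀ i, 1 ≤ s i) (ht : ∀ i, 1 ≤ t i)
    (σ τ : Fin k → ℝ)
    (hσ : ∀ i, σ i = ∑ j ∈ Finset.univ.filter (fun j => j ≤ i), (s j : ℝ))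
    (hτ : ∀ i, τ i = ∑ j ∈ Finset.univ.filter (fun j => i ≤ j), (t j : ℝ)) :
    (∀ μ : ℝ, IsMaxEig (adjMat (thresholdGraphL (runList s t))) μ →
      ∀ i, ((τ i - 1) + Real.sqrt ((τ i - 1) ^ 2 + 4 * τ i * σ i)) / 2 ≤ μ) ∧
    (∀ μ : ℝ, IsMinEig (adjMat (thresholdGraphL (runList s t))) μ →
      ∀ i, μ ≤ ((τ i - 1) - Real.sqrt ((τ i - 1) ^ 2 + 4 * τ i * σ i)) / 2) :=
  threshold_extreme_eigenvalue_bounds_general s t hs ht σ τ hσ hτ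
end
end
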